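/- arXiv:0811.1733 — 7 statements merged into one kernel-verified Lean document; each statement's English description precedes it below -/
import Mathlib

section
/- For all nonnegative integers p, q, i, j, the generalized Eulerian number satisfies the closed formula A_{p,q}(i,j) = \sum_{t=0}^{i} (-1)^{i-t} · C(p+q+t+1, t) · C(p+q+i+j+2, i-t) · (p+1+t)^{i+j}, as an identity of integers, where C(n,k) denotes the binomial coefficient. -/
/-!
Free the binomial `C(N, i - t)` and the exponent in the closed form: call the resulting sum
`F(n, N, e)`. Pascal's rule in `N` together with the absorption identity
`(k + 1) C(N + 1, k + 1) = (N + 1) C(N, k)` gives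
`F(n+1, N+1, e+1) = (N - n - p - 1) F(n, N, e) + (n + p + 2) F(n+1, N, e)`,
which at `N = p + q + i + j + 2` is exactly the recurrence of `A_{p,q}`. The boundary `i = 0` is
immediate. For `j = 0` the recurrence reduces to `F(n, N, n) = (q + 1)^n` once one knows the
vanishing `F(n, N, e) = 0` for `e < n` and `p + q + 2 + e ≤ N < p + q + 2 + n`; this follows by
induction on `e` from `e = 0`, where Chu–Vandermonde evaluates `F` as a signed binomial
coefficient.
-/

/-- The generalized Eulerian number `eulerA p q i j` counts the paths in the Euler graph
from `(p, q)` to `(p + i, q + j)`.  It is defined by the initial conditions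
`eulerA p q i 0 = (q+1)^i`, `eulerA p q 0 j = (p+1)^j` and the recurrence
`eulerA p q i j = (j+q+1) * eulerA p q (i-1) j + (i+p+1) * eulerA p q i (j-1)`. -/
def eulerA (p q : ℕ) : ℕ → ℕ → ℕ
  | i, 0 => (q + 1) ^ i
  | 0, j + 1 => (p + 1) ^ (j + 1)
  | i + 1, j + 1 =>
      (j + 1 + q + 1) * eulerA p q i (j + 1) + (i + 1 + p + 1) * eulerA p q (i + 1) j

open Finset

section Recurrence

variable {R : Type*} [CommRing R]

/-- Indexed by `(t, k)` with `t + k = n` instead of `(t, n - t)`, to avoid truncated subtraction. -/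
def eulerSum (c : ℕ → R) (b : R) (n N e : ℕ) : R :=
  ∑ x ∈ antidiagonal n, (-1) ^ x.2 * c x.1 * N.choose x.2 * (b + x.1) ^ e

variable (c : ℕ → R) (b : R)

theorem eulerSum_zero_left (N e : ℕ) : eulerSum c b 0 N e = c 0 * b ^ e := by
  simp [eulerSum]

theorem eulerSum_succ_succ (n N e : ℕ) :
    eulerSum c b (n + 1) (N + 1) e = eulerSum c b (n + 1) N e - eulerSum c b n N e := by
  rw [eulerSum, eulerSum, eulerSum, Nat.sum_antidiagonal_succ', Nat.sum_antidiagonal_succ',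
    add_sub_assoc, ← sum_sub_distrib]
  congr 1
  · simp
  · refine sum_congr rfl fun x _ => ?_
    rw [Nat.choose_succ_succ']
    push_cast
    ring

theorem eulerSum_succ_succ_exponent_succ (n N e : ℕ) :
    eulerSum c b (n + 1) (N + 1) (e + 1) =
      (b + n + 1) * eulerSum c b (n + 1) (N + 1) e + (N + 1) * eulerSum c b n N e := by
  rw [eulerSum, eulerSum, eulerSum, Nat.sum_antidiagonal_succ', Nat.sum_antidiagonal_succ',
    mul_add, add_assoc, mul_sum, mul_sum, ← sum_add_distrib]
  congr 1
  · push_cast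
    ring
  · refine sum_congr rfl fun x hx => ?_
    have hsum : (x.1 : R) = n - x.2 := by
      rw [← mem_antidiagonal.mp hx]
      push_cast
      ring
    have habsorb : ((N : R) + 1) * N.choose x.2 = (N + 1).choose (x.2 + 1) * (x.2 + 1) := by
      simpa using congrArg (Nat.cast : ℕ → R) (Nat.add_one_mul_choose_eq N x.2)
    rw [hsum]
    linear_combination (-(-1) ^ x.2 * c x.1 * (b + (n - x.2)) ^ e) * habsorb

theorem eulerSum_succ_succ_succ (n N e : ℕ) :
    eulerSum c b (n + 1) (N + 1) (e + 1) =
      (N - n - b) * eulerSum c b n N e + (n + b + 1) * eulerSum c b (n + 1) N e := by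
  rw [eulerSum_succ_succ_exponent_succ, eulerSum_succ_succ]
  ring

end Recurrence

section Vanishing

variable (a : ℕ) (b : ℤ)

-- `(-1)^t C(a + t + 1, t) = Ring.choose (-(a + 2)) t`, so this is Chu–Vandermonde.
theorem eulerSum_choose_pow_zero (n N : ℕ) :
    eulerSum (fun t => ((a + t + 1).choose t : ℤ)) b n N 0 =
      (-1) ^ n * Ring.choose ((N : ℤ) - (a + 2)) n := by
  rw [show (N : ℤ) - (a + 2) = -((a : ℤ) + 2) + N by ring, Ring.add_choose_eq _ (.all _ _),
    mul_sum, eulerSum]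
  refine sum_congr rfl fun x hx => ?_
  have hsign : ((-1 : ℤ) ^ x.1) ^ 2 = 1 := by
    rw [← pow_mul, mul_comm, pow_mul, neg_one_sq, one_pow]
  rw [Ring.choose_neg, Units.smul_def, Int.coe_negOnePow_natCast, Ring.choose_natCast,
    show (a : ℤ) + 2 + x.1 - 1 = ((a + x.1 + 1 : ℕ) : ℤ) by push_cast; ring, Ring.choose_natCast,
    ← mem_antidiagonal.mp hx, pow_add, smul_eq_mul]
  linear_combination (-(-1) ^ x.2 * ((a + x.1 + 1).choose x.1 : ℤ) * (N.choose x.2 : ℤ)) * hsign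

theorem eulerSum_choose_eq_zero {n d e : ℕ} (h : e + d < n) :
    eulerSum (fun t => ((a + t + 1).choose t : ℤ)) b n (a + e + d + 2) e = 0 := by
  induction e generalizing n d with
  | zero =>
    rw [eulerSum_choose_pow_zero, show ((a + 0 + d + 2 : ℕ) : ℤ) - (a + 2) = d by push_cast; ring,
      Ring.choose_natCast, Nat.choose_eq_zero_of_lt (by omega)]
    simp
  | succ e ih =>
    obtain ⟨n, rfl⟩ : ∃ m, n = m + 1 := ⟨n - 1, by omega⟩
    rw [show a + (e + 1) + d + 2 = a + e + d + 2 + 1 by ring, eulerSum_succ_succ_succ,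
      ih (by omega), ih (by omega)]
    ring

theorem eulerSum_choose_diagonal (n : ℕ) :
    eulerSum (fun t => ((a + t + 1).choose t : ℤ)) b n (a + n + 2) n = (a + 2 - b) ^ n := by
  induction n with
  | zero => simp [eulerSum_zero_left]
  | succ n ih =>
    have hzero : eulerSum (fun t => ((a + t + 1).choose t : ℤ)) b (n + 1) (a + n + 2) n = 0 :=
      eulerSum_choose_eq_zero a b (d := 0) (by omega)
    rw [show a + (n + 1) + 2 = a + n + 2 + 1 by ring, eulerSum_succ_succ_succ, ih, hzero]
    push_cast
    ring

end Vanishing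

theorem eulerA_eq_eulerSum (p q i j : ℕ) :
    (eulerA p q i j : ℤ) =
      eulerSum (fun t => ((p + q + t + 1).choose t : ℤ)) (p + 1) i (p + q + i + j + 2) (i + j) := by
  induction i, j using eulerA.induct with
  | case1 i =>
    rw [eulerA, add_zero, add_zero, eulerSum_choose_diagonal]
    push_cast
    ring
  | case2 j =>
    rw [eulerA, eulerSum_zero_left]
    simp
  | case3 i j ih1 ih2 =>
    rw [eulerA, show p + q + (i + 1) + (j + 1) + 2 = p + q + i + j + 3 + 1 by ring,
      show i + 1 + (j + 1) = i + j + 1 + 1 by ring, eulerSum_succ_succ_succ]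
    push_cast
    rw [ih1, ih2]
    ring_nf

theorem stmt0 (p q i j : ℕ) :
    (eulerA p q i j : ℤ) =
      ∑ t ∈ Finset.range (i + 1),
        (-1 : ℤ) ^ (i - t) * (p + q + t + 1).choose t * (p + q + i + j + 2).choose (i - t) *
          ((p : ℤ) + 1 + t) ^ (i + j) := by
  rw [eulerA_eq_eulerSum]
  exact Nat.sum_antidiagonal_eq_sum_range_succ
    (fun t k => (-1 : ℤ) ^ k * ((p + q + t + 1).choose t : ℤ) * (p + q + i + j + 2).choose k *
      ((p : ℤ) + 1 + t) ^ (i + j)) i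
end

section
/- Fix nonnegative integers p, q, t, and for nonnegative integers i, j define the integer a_t(i,j) = (-1)^{i-t} · C(p+q+i+j+2, i-t) · (p+1+t)^{i+j} if t ≤ i, and a_t(i,j) = 0 if t > i, where C(n,k) denotes the binomial coefficient. Then for all integers i, j ≥ 1, a_t(i,j) = (j+q+1)·a_t(i-1,j) + (i+p+1)·a_t(i,j-1). -/
/-!
Write `c = p + 1 + t` and `i = t + m`. Dividing the recurrence by `(-1)^m c^(i+j-1)` leaves
`-c C(n+1, m+1) = (j+q+1) C(n, m) - (i+p+1) C(n, m+1)` with `n = p+q+i+j+1`. Since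
`(j+q+1) + c = n - m` and `(i+p+1) - c = m + 1`, this is Pascal's rule combined with
`(m+1) C(n, m+1) = (n-m) C(n, m)`. The terms with `t > i` vanish, and at the boundary `t = i` only
`c^(i+j) = (i+p+1) c^(i+j-1)` remains.
-/

theorem Int.neg_mul_choose_succ_succ (n m : ℕ) (α β c : ℤ)
    (hα : α + c = ((n - m : ℕ) : ℤ)) (hβ : β = c + m + 1) :
    -c * (n + 1).choose (m + 1) = α * n.choose m - β * n.choose (m + 1) := by
  have hpascal : ((n + 1).choose (m + 1) : ℤ) = n.choose m + n.choose (m + 1) := by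
    exact_mod_cast Nat.choose_succ_succ n m
  have hratio : (n.choose (m + 1) : ℤ) * (m + 1) = n.choose m * ((n - m : ℕ) : ℤ) := by
    exact_mod_cast Nat.choose_succ_right_eq n m
  rw [hpascal]
  rw [← hα] at hratio
  linear_combination hratio + (n.choose (m + 1) : ℤ) * hβ

/-- The closed form `a_t(i, j)`. -/
def signedChoosePow (p q t i j : ℕ) : ℤ :=
  if t ≤ i then
    (-1 : ℤ) ^ (i - t) * (p + q + i + j + 2).choose (i - t) * ((p : ℤ) + 1 + t) ^ (i + j)
  else 0

theorem signedChoosePow_add_left (p q t m j : ℕ) :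
    signedChoosePow p q t (t + m) j =
      (-1 : ℤ) ^ m * (p + q + t + m + j + 2).choose m * ((p : ℤ) + 1 + t) ^ (t + m + j) := by
  simp only [signedChoosePow, if_pos (Nat.le_add_right t m), Nat.add_sub_cancel_left,
    ← add_assoc]

theorem signedChoosePow_of_lt (p q t i j : ℕ) (h : i < t) : signedChoosePow p q t i j = 0 :=
  if_neg (Nat.not_le_of_lt h)

theorem signedChoosePow_self (p q t j : ℕ) :
    signedChoosePow p q t t j = ((p : ℤ) + 1 + t) ^ (t + j) := by
  simpa using signedChoosePow_add_left p q t 0 j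

theorem signedChoosePow_succ_succ (p q t i j : ℕ) :
    signedChoosePow p q t (i + 1) (j + 1) =
      ((j + 1 : ℕ) + q + 1 : ℤ) * signedChoosePow p q t i (j + 1) +
        ((i + 1 : ℕ) + p + 1 : ℤ) * signedChoosePow p q t (i + 1) j := by
  rcases Nat.lt_or_ge i t with hit | hti
  · rcases Nat.lt_or_ge (i + 1) t with hit' | hti'
    · simp only [signedChoosePow_of_lt _ _ _ _ _ hit, signedChoosePow_of_lt _ _ _ _ _ hit',
        mul_zero, add_zero]
    · obtain rfl : t = i + 1 := by omega
      rw [signedChoosePow_self, signedChoosePow_self, signedChoosePow_of_lt _ _ _ _ _ hit]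
      push_cast
      ring
  · obtain ⟨m, rfl⟩ := Nat.exists_eq_add_of_le hti
    rw [show t + m + 1 = t + (m + 1) from rfl, signedChoosePow_add_left,
      signedChoosePow_add_left, signedChoosePow_add_left]
    set n := p + q + t + m + j + 3
    rw [show p + q + t + (m + 1) + (j + 1) + 2 = n + 1 by omega,
      show p + q + t + m + (j + 1) + 2 = n by omega, show p + q + t + (m + 1) + j + 2 = n by omega]
    have key := Int.neg_mul_choose_succ_succ n m ((j + 1 : ℕ) + q + 1) ((t + (m + 1) : ℕ) + p + 1)
      ((p : ℤ) + 1 + t) (by push_cast [show n - m = p + q + t + j + 3 by omega]; ring)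
      (by push_cast; ring)
    linear_combination (-1 : ℤ) ^ m * ((p : ℤ) + 1 + t) ^ (t + m + j + 1) * key

theorem stmt1 (p q t : ℕ) (a : ℕ → ℕ → ℤ)
    (ha : ∀ i j : ℕ, a i j =
      if t ≤ i then
        (-1 : ℤ) ^ (i - t) * (p + q + i + j + 2).choose (i - t) * ((p : ℤ) + 1 + t) ^ (i + j)
      else 0) :
    ∀ i j : ℕ, 1 ≤ i → 1 ≤ j →
      a i j = ((j : ℤ) + q + 1) * a (i - 1) j + ((i : ℤ) + p + 1) * a i (j - 1) := by
  obtain rfl : a = signedChoosePow p q t := funext fun i => funext (ha i)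
  intro i j hi hj
  obtain ⟨i, rfl⟩ := Nat.exists_eq_add_of_le' hi
  obtain ⟨j, rfl⟩ := Nat.exists_eq_add_of_le' hj
  exact signedChoosePow_succ_succ p q t i j
end

section
/- For all nonnegative integers p, q and every integer i ≥ 1, \sum_{t=0}^{i} (-1)^{i-t} · C(p+q+t+1, t) · C(p+q+i+2, i-t) · (p+1+t)^{i} = (q+1)^{i}, as an identity of integers, where C(n,k) denotes the binomial coefficient. -/
/-!
The weights `w t = C(a+t, t) C(a+n+1, n-t)` satisfy `w t (t + a + 1) = (a+1) C(a+n+1, a+1) C(n, t)`.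
For a polynomial `P` of degree at most `n` write `P x = P y + (x - y) Q x` with `y = -(a+1)` and
`deg Q < n`. The `Q`-part of `∑ (-1)^(n-t) w t P t` is then a multiple of the `n`-th forward
difference of `Q`, which vanishes, while `∑ (-1)^t w t = 1` is the Chu–Vandermonde identity for
`C(-(a+1), t) C(a+n+1, n-t)`. Hence the sum is `(-1)^n P(-(a+1))`; the theorem is the case
`a = p + q + 1`, `P x = (x + p + 1)^i`.
-/

open Finset Polynomial

theorem neg_one_pow_sub_of_le {R : Type*} [Ring R] {m n : ℕ} (h : m ≤ n) :
    (-1 : R) ^ (n - m) = (-1) ^ n * (-1) ^ m := by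
  rw [← pow_sub_mul_pow (-1 : R) h, mul_assoc, ← pow_add, ← two_mul, pow_mul]
  simp

theorem Nat.add_choose_mul_choose_sub_mul_add_succ (a n t : ℕ) (ht : t ≤ n) :
    (a + t).choose t * (a + n + 1).choose (n - t) * (a + t + 1)
      = (a + 1) * (a + n + 1).choose (a + 1) * n.choose t := by
  have hmul := Nat.choose_mul (n := a + n + 1) (k := a + t + 1) (s := a + 1) (by omega)
  rw [show a + n + 1 - (a + 1) = n by omega, show a + t + 1 - (a + 1) = t by omega] at hmul
  calc (a + t).choose t * (a + n + 1).choose (n - t) * (a + t + 1)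
      = (a + n + 1).choose (a + t + 1) * ((a + t + 1) * (a + t).choose a) := by
        rw [← Nat.choose_symm_add,
          Nat.choose_symm_of_eq_add (show a + n + 1 = (n - t) + (a + t + 1) by omega)]
        ring
    _ = (a + 1) * (a + n + 1).choose (a + 1) * n.choose t := by
        rw [Nat.add_one_mul_choose_eq, ← mul_assoc, hmul]
        ring

theorem Int.sum_neg_one_pow_mul_add_choose_mul_choose (a n : ℕ) :
    ∑ t ∈ Finset.range (n + 1), (-1 : ℤ) ^ t * (a + t).choose t * (a + n + 1).choose (n - t)
      = 1 := by
  have h := Ring.add_choose_eq (r := -((a : ℤ) + 1)) (s := ((a + n + 1 : ℕ) : ℤ)) n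
    (Commute.all _ _)
  rw [show -((a : ℤ) + 1) + ((a + n + 1 : ℕ) : ℤ) = (n : ℤ) by push_cast; ring,
    Ring.choose_natCast, Nat.choose_self, Nat.sum_antidiagonal_eq_sum_range_succ
      (fun i j => Ring.choose (-((a : ℤ) + 1)) i * Ring.choose ((a + n + 1 : ℕ) : ℤ) j),
    Nat.cast_one] at h
  refine (sum_congr rfl fun t _ => ?_).trans h.symm
  rw [Ring.choose_neg, Ring.choose_natCast,
    show (a : ℤ) + 1 + t - 1 = ((a + t : ℕ) : ℤ) by push_cast; ring,
    Ring.choose_natCast, Units.smul_def, Int.coe_negOnePow_natCast, smul_eq_mul]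

theorem sum_neg_one_pow_sub_mul_add_choose_mul_choose {R : Type*} [Ring R] (a n : ℕ) :
    ∑ t ∈ range (n + 1), (-1 : R) ^ (n - t) * (a + t).choose t * (a + n + 1).choose (n - t)
      = (-1) ^ n := by
  have h := congr_arg (fun z : ℤ => ((-1) ^ n * z : R))
    (Int.sum_neg_one_pow_mul_add_choose_mul_choose a n)
  simp only [Int.cast_sum, mul_sum, Int.cast_mul, Int.cast_pow, Int.cast_neg, Int.cast_one,
    Int.cast_natCast, mul_one] at h
  rw [← h]
  refine sum_congr rfl fun t ht => ?_
  rw [neg_one_pow_sub_of_le (Nat.lt_succ_iff.mp (mem_range.mp ht)), mul_assoc, mul_assoc,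
    mul_assoc]

theorem Polynomial.sum_neg_one_pow_sub_mul_add_choose_mul_choose_mul_eval {R : Type*}
    [CommRing R] (a n : ℕ) (P : R[X]) (hP : P.natDegree ≤ n) :
    ∑ t ∈ range (n + 1), (-1 : R) ^ (n - t) * (a + t).choose t * (a + n + 1).choose (n - t) *
        P.eval (t : R)
      = (-1) ^ n * P.eval (-(a + 1 : R)) := by
  nontriviality R
  rcases Nat.eq_zero_or_pos n with rfl | hn
  · rw [eq_C_of_natDegree_le_zero hP]
    simp
  set y : R := -(a + 1)
  set Q := P /ₘ (X - C y)
  have hdecomp (x : R) : P.eval x = P.eval y + (x - y) * Q.eval x := by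
    conv_lhs => rw [← modByMonic_add_div P (X - C y), modByMonic_X_sub_C_eq_C_eval]
    simp [Q]
  have hQ : Q.natDegree < n := by
    rw [natDegree_divByMonic _ (monic_X_sub_C y), natDegree_X_sub_C]
    omega
  have hQ_fwdDiff :
      ∑ t ∈ range (n + 1), (-1 : R) ^ (n - t) * n.choose t * Q.eval (t : R) = 0 := by
    have := congr_fun (fwdDiff_iter_eq_zero_of_degree_lt hQ) 0
    rw [fwdDiff_iter_eq_sum_shift] at this
    simpa [zsmul_eq_mul] using this
  calc _ = ∑ t ∈ range (n + 1),
        ((-1 : R) ^ (n - t) * (a + t).choose t * (a + n + 1).choose (n - t) * P.eval y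
          + ((a + 1) * (a + n + 1).choose (a + 1)) *
            ((-1 : R) ^ (n - t) * n.choose t * Q.eval (t : R))) := by
        refine sum_congr rfl fun t ht => ?_
        have hw := congr_arg (Nat.cast (R := R))
          (Nat.add_choose_mul_choose_sub_mul_add_succ a n t (Nat.lt_succ_iff.mp (mem_range.mp ht)))
        push_cast at hw
        rw [hdecomp, show (t : R) - y = a + t + 1 by ring]
        linear_combination (-1 : R) ^ (n - t) * Q.eval (t : R) * hw
    _ = _ := by
        rw [sum_add_distrib, ← sum_mul, ← mul_sum, hQ_fwdDiff,
          sum_neg_one_pow_sub_mul_add_choose_mul_choose]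
        ring

theorem stmt2_general (p q i : ℕ) :
    ∑ t ∈ Finset.range (i + 1),
        (-1 : ℤ) ^ (i - t) * (p + q + t + 1).choose t * (p + q + i + 2).choose (i - t) *
          ((p : ℤ) + 1 + t) ^ i
      = ((q : ℤ) + 1) ^ i := by
  have hdeg : ((X + C ((p : ℤ) + 1)) ^ i).natDegree ≤ i := by
    rw [natDegree_pow, natDegree_X_add_C, mul_one]
  have h := sum_neg_one_pow_sub_mul_add_choose_mul_choose_mul_eval (p + q + 1) i _ hdeg
  simp only [eval_pow, eval_add, eval_X, eval_C] at h
  calc _ = ∑ t ∈ range (i + 1), (-1 : ℤ) ^ (i - t) * (p + q + 1 + t).choose t *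
        (p + q + 1 + i + 1).choose (i - t) * ((t : ℤ) + (p + 1)) ^ i := by
        refine sum_congr rfl fun t _ => ?_
        rw [show p + q + t + 1 = p + q + 1 + t by ring,
          show p + q + i + 2 = p + q + 1 + i + 1 by ring]
        ring
    _ = ((-1) * (-(((p + q + 1 : ℕ) : ℤ) + 1) + (p + 1))) ^ i := by rw [h, mul_pow]
    _ = ((q : ℤ) + 1) ^ i := by push_cast; ring_nf

theorem stmt2 (p q i : ℕ) (hi : 1 ≤ i) :
    ∑ t ∈ Finset.range (i + 1),
        (-1 : ℤ) ^ (i - t) * (p + q + t + 1).choose t * (p + q + i + 2).choose (i - t) *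
          ((p : ℤ) + 1 + t) ^ i
      = ((q : ℤ) + 1) ^ i :=
  stmt2_general p q i
end

section
/- For all nonnegative integers p, q, i, j, \sum_{t=0}^{i} (-1)^{i-t} · C(p+q+t+1, t) · C(p+q+i+j+2, i-t) · (p+1+t)^{i+j} = \sum_{t=0}^{j} (-1)^{j-t} · C(p+q+t+1, t) · C(p+q+i+j+2, j-t) · (q+1+t)^{i+j}, as an identity of integers, where C(n,k) denotes the binomial coefficient. -/
/-!
Let `L_{p,q}(k, n)` be the left-hand side with `i + j` replaced by `k` and `i` by `n`. Pascal's
rule and absorption give `L(k+1, n+1) = (n+p+2) L(k, n+1) + (k+q+1-n) L(k, n)`, besides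
`L(k+1, 0) = (p+1) L(k, 0)`; the row `k = 0` is `[n = 0]`, being the coefficient of `x^n` in
`(1-x)^(A+1) (1-x)^(-(A+1))`. So `L_{p,q}` is the triangle `T_{p,q}` cut out by this recurrence,
and substituting `n ↦ k - n`, `p ↔ q` maps the recurrence to itself, whence
`T_{p,q}(k, n) = T_{q,p}(k, k - n)`.
-/

open Finset

theorem sum_neg_one_pow_mul_add_choose_mul_succ_choose (A m : ℕ) :
    ∑ t ∈ range (m + 1), (-1 : ℤ) ^ (m - t) * (A + t).choose t * (A + 1).choose (m - t) =
      if m = 0 then 1 else 0 := by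
  -- Chu–Vandermonde for `-(A+1) + (A+1) = 0`, with `choose (-(A+1)) t = (-1)^t C(A+t, t)`
  have h := Ring.add_choose_eq m (Commute.all (-((A : ℤ) + 1)) ((A : ℤ) + 1))
  rw [neg_add_cancel, Ring.choose_zero_ite, Nat.sum_antidiagonal_eq_sum_range_succ_mk] at h
  calc _ = (-1) ^ m * ∑ t ∈ range (m + 1),
        Ring.choose (-((A : ℤ) + 1)) t * Ring.choose ((A : ℤ) + 1) (m - t) := by
        rw [mul_sum]
        refine sum_congr rfl fun t ht => ?_
        obtain ⟨s, rfl⟩ := Nat.exists_eq_add_of_le (Nat.lt_succ_iff.mp (mem_range.mp ht))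
        have hA : (A : ℤ) + 1 + t - 1 = ((A + t : ℕ) : ℤ) := by push_cast; ring
        have hsq : ((-1 : ℤ) ^ t) * (-1) ^ t = 1 := by
          rw [← pow_add]; exact Even.neg_one_pow ⟨t, rfl⟩
        rw [Ring.choose_neg, hA, Ring.choose_natCast, Units.smul_def, Int.coe_negOnePow_natCast,
          smul_eq_mul, ← Nat.cast_succ, Ring.choose_natCast, Nat.add_sub_cancel_left, pow_add]
        linear_combination
          -((-1 : ℤ) ^ s * (A + t).choose t * (A + 1).choose s) * hsq
    _ = (-1) ^ m * if m = 0 then 1 else 0 := by rw [h]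
    _ = _ := by split_ifs with hm <;> simp [hm]

def altTerm (p q k n t : ℕ) : ℤ :=
  (-1) ^ (n - t) * (p + q + t + 1).choose t * (p + q + k + 2).choose (n - t) *
    ((p : ℤ) + 1 + t) ^ k

def altSum (p q k n : ℕ) : ℤ :=
  ∑ t ∈ range (n + 1), altTerm p q k n t

-- The second index ranges over `ℤ` so that the reflection `n ↦ k - n` needs no case split.
def triangle (p q : ℕ) : ℕ → ℤ → ℤ
  | 0, n => if n = 0 then 1 else 0
  | k + 1, n => (n + p + 1) * triangle p q k n + (k + q + 2 - n) * triangle p q k (n - 1)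

theorem triangle_of_neg (p q k : ℕ) {n : ℤ} (hn : n < 0) : triangle p q k n = 0 := by
  induction k generalizing n with
  | zero => simp [triangle, hn.ne]
  | succ k ih => simp [triangle, ih hn, ih (show n - 1 < 0 by omega)]

theorem triangle_comm (p q k : ℕ) (n : ℤ) : triangle p q k n = triangle q p k (k - n) := by
  induction k generalizing n with
  | zero => simp [triangle]
  | succ k ih =>
    simp only [triangle, ih n, ih (n - 1)]
    rw [show (k : ℤ) - (n - 1) = (k + 1 : ℕ) - n by push_cast; ring,
      show (k + 1 : ℕ) - n - 1 = (k : ℤ) - n by push_cast; ring]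
    push_cast
    ring

theorem altSum_zero_left (p q n : ℕ) : altSum p q 0 n = if n = 0 then 1 else 0 := by
  rw [← sum_neg_one_pow_mul_add_choose_mul_succ_choose (p + q + 1)]
  refine sum_congr rfl fun t _ => ?_
  simp only [altTerm, pow_zero, mul_one]
  ring_nf

theorem altSum_succ_zero (p q k : ℕ) : altSum p q (k + 1) 0 = (p + 1) * altSum p q k 0 := by
  simp [altSum, altTerm, pow_succ, mul_comm]

theorem altTerm_succ_succ (p q k n t : ℕ) (ht : t ≤ n) :
    altTerm p q (k + 1) (n + 1) t =
      ((n : ℤ) + p + 2) * altTerm p q k (n + 1) t +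
        ((k : ℤ) + q + 1 - n) * altTerm p q k n t := by
  obtain ⟨s, rfl⟩ := Nat.exists_eq_add_of_le ht
  have hpascal := congrArg (Nat.cast : ℕ → ℤ) (Nat.choose_succ_succ' (p + q + k + 2) s)
  have habsorb := congrArg (Nat.cast : ℕ → ℤ) (Nat.add_one_mul_choose_eq (p + q + k + 2) s)
  simp only [altTerm, show t + s + 1 - t = s + 1 by omega, Nat.add_sub_cancel_left,
    show p + q + (k + 1) + 2 = p + q + k + 2 + 1 by omega]
  push_cast at hpascal habsorb ⊢
  linear_combination (-(-1 : ℤ) ^ s * (p + q + t + 1).choose t * ((p : ℤ) + 1 + t) ^ k) *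
    (((t : ℤ) + s + p + 2) * hpascal + habsorb)

theorem altSum_succ_succ (p q k n : ℕ) :
    altSum p q (k + 1) (n + 1) =
      ((n : ℤ) + p + 2) * altSum p q k (n + 1) + ((k : ℤ) + q + 1 - n) * altSum p q k n := by
  have hlast : altTerm p q (k + 1) (n + 1) (n + 1) =
      ((n : ℤ) + p + 2) * altTerm p q k (n + 1) (n + 1) := by
    simp only [altTerm, Nat.sub_self, pow_zero, Nat.choose_zero_right, pow_succ]
    push_cast
    ring
  rw [altSum, altSum, sum_range_succ, sum_range_succ _ (n + 1),
    sum_congr rfl fun t ht => altTerm_succ_succ p q k n t (Nat.lt_succ_iff.mp (mem_range.mp ht)),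
    sum_add_distrib, ← mul_sum, ← mul_sum, hlast, altSum]
  ring

theorem altSum_eq_triangle (p q k n : ℕ) : altSum p q k n = triangle p q k n := by
  induction k generalizing n with
  | zero => simp [altSum_zero_left, triangle]
  | succ k ih =>
    cases n with
    | zero => simp [altSum_succ_zero, triangle, ih, triangle_of_neg]
    | succ n =>
      rw [altSum_succ_succ, ih, ih, triangle]
      push_cast
      rw [add_sub_cancel_right]
      ring

theorem altSum_comm (p q i j : ℕ) : altSum p q (i + j) i = altSum q p (i + j) j := by
  rw [altSum_eq_triangle, altSum_eq_triangle, triangle_comm]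
  push_cast
  rw [add_sub_cancel_left]

theorem stmt4 (p q i j : ℕ) :
    ∑ t ∈ Finset.range (i + 1),
        (-1 : ℤ) ^ (i - t) * (p + q + t + 1).choose t * (p + q + i + j + 2).choose (i - t) *
          ((p : ℤ) + 1 + t) ^ (i + j)
      = ∑ t ∈ Finset.range (j + 1),
          (-1 : ℤ) ^ (j - t) * (p + q + t + 1).choose t * (p + q + i + j + 2).choose (j - t) *
            ((q : ℤ) + 1 + t) ^ (i + j) := by
  simpa only [altSum, altTerm, Nat.add_comm q p, ← Nat.add_assoc] using altSum_comm p q i j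
end

section
/- Let p, q be nonnegative integers and let a(i,j) and b(i,j) be positive real numbers defined for all nonnegative integers i, j with (i,j) ≠ (0,0), satisfying a(i,j) = (j+q+1)·a(i-1,j) + (i+p+1)·a(i,j-1) and b(i,j) = (j+q)·b(i-1,j) + (i+p+1)·b(i,j-1) for all i, j ≥ 1. Assume the initial conditions: a(0,j+1)/b(0,j+1) ≤ a(0,j)/b(0,j) for all j ≥ 1; a(0,1)/b(0,1) ≤ (q/(q+1))·a(1,0)/b(1,0); and a(i,0)/b(i,0) ≤ (q/(q+1))·a(i+1,0)/b(i+1,0) for all i ≥ 1. Then for all nonnegative integers i, j with (i,j) ≠ (0,0), a(i,j+1)/b(i,j+1) ≤ a(i,j)/b(i,j) ≤ ((q+j)/(q+1+j))·a(i+1,j)/b(i+1,j). -/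
/-!
Write `r = a / b` and `c j = (q + j) / (q + 1 + j)`. By the recurrences, `r (i+1) (j+1)` is a
mediant of `r i (j+1) / c (j+1)` and `r (i+1) j`, so the mixed inequality
`r i (j+1) ≤ c (j+1) * r (i+1) j` yields both `r (i+1) (j+1) ≤ r (i+1) j` and
`r i (j+1) ≤ c (j+1) * r (i+1) (j+1)`. Conversely the two claimed inequalities at `(i, j)`,
together with `c j ≤ c (j+1)`, give the mixed inequality at `(i, j)`. Induction on `i + j` closes
the loop, the boundary of the quadrant being supplied by the initial conditions.
-/
section Mediant

variable {α : Type*} [Field α] [LinearOrder α] [IsStrictOrderedRing α] {a b c d : α}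

theorem div_le_add_div_add (hb : 0 < b) (hd : 0 < d) (h : a / b ≤ c / d) :
    a / b ≤ (a + c) / (b + d) := by
  rw [div_le_div_iff₀ hb hd] at h
  rw [div_le_div_iff₀ hb (add_pos hb hd)]
  linear_combination h

theorem add_div_add_le_div (hb : 0 < b) (hd : 0 < d) (h : a / b ≤ c / d) :
    (a + c) / (b + d) ≤ c / d := by
  rw [div_le_div_iff₀ hb hd] at h
  rw [div_le_div_iff₀ (add_pos hb hd) hd]
  linear_combination h

end Mediant

theorem weighted_mediant {m k a₁ b₁ a₂ b₂ : ℝ} (hm : 0 < m) (hk : 0 < k) (hb₁ : 0 < b₁)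
    (hb₂ : 0 < b₂) (h : a₁ / b₁ ≤ m / (m + 1) * (a₂ / b₂)) :
    ((m + 1) * a₁ + k * a₂) / (m * b₁ + k * b₂) ≤ a₂ / b₂ ∧
      a₁ / b₁ ≤ m / (m + 1) * (((m + 1) * a₁ + k * a₂) / (m * b₁ + k * b₂)) := by
  have hscale (x : ℝ) : a₁ / b₁ ≤ m / (m + 1) * x ↔ (m + 1) * a₁ / (m * b₁) ≤ x := by
    rw [← div_le_iff₀' (by positivity)]
    congr! 1
    field_simp
  rw [hscale] at h ⊢
  have h' : (m + 1) * a₁ / (m * b₁) ≤ k * a₂ / (k * b₂) := by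
    rwa [mul_div_mul_left _ _ hk.ne']
  rw [← mul_div_mul_left a₂ b₂ hk.ne']
  exact ⟨add_div_add_le_div (by positivity) (by positivity) h',
    div_le_add_div_add (by positivity) (by positivity) h'⟩

theorem coeff_le_coeff_succ (q j : ℕ) :
    ((q : ℝ) + j) / ((q : ℝ) + 1 + j) ≤ ((q : ℝ) + (j + 1 : ℕ)) / ((q : ℝ) + 1 + (j + 1 : ℕ)) := by
  rw [div_le_div_iff₀ (by positivity) (by positivity)]
  push_cast
  nlinarith

section Recurrence

variable {p q : ℕ} {a b : ℕ → ℕ → ℝ}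

theorem ratio_succ_bounds_of_le_coeff_mul (hbpos : ∀ i j : ℕ, (i, j) ≠ (0, 0) → 0 < b i j)
    (ha : ∀ i j : ℕ, 1 ≤ i → 1 ≤ j →
      a i j = ((j : ℝ) + q + 1) * a (i - 1) j + ((i : ℝ) + p + 1) * a i (j - 1))
    (hb : ∀ i j : ℕ, 1 ≤ i → 1 ≤ j →
      b i j = ((j : ℝ) + q) * b (i - 1) j + ((i : ℝ) + p + 1) * b i (j - 1))
    (i j : ℕ) (h : a i (j + 1) / b i (j + 1) ≤
      ((q : ℝ) + (j + 1 : ℕ)) / ((q : ℝ) + 1 + (j + 1 : ℕ)) * (a (i + 1) j / b (i + 1) j)) :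
    a (i + 1) (j + 1) / b (i + 1) (j + 1) ≤ a (i + 1) j / b (i + 1) j ∧
      a i (j + 1) / b i (j + 1) ≤ ((q : ℝ) + (j + 1 : ℕ)) / ((q : ℝ) + 1 + (j + 1 : ℕ)) *
        (a (i + 1) (j + 1) / b (i + 1) (j + 1)) := by
  set m : ℝ := q + (j + 1 : ℕ)
  set k : ℝ := (i + 1 : ℕ) + p + 1
  have hm1 : (q : ℝ) + 1 + (j + 1 : ℕ) = m + 1 := by ring
  have ha' : a (i + 1) (j + 1) = (m + 1) * a i (j + 1) + k * a (i + 1) j := by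
    rw [ha (i + 1) (j + 1) (by omega) (by omega)]
    simp only [Nat.add_sub_cancel, m]
    ring
  have hb' : b (i + 1) (j + 1) = m * b i (j + 1) + k * b (i + 1) j := by
    rw [hb (i + 1) (j + 1) (by omega) (by omega)]
    simp only [Nat.add_sub_cancel, m]
    ring
  rw [hm1] at h ⊢
  rw [ha', hb']
  exact weighted_mediant (by positivity) (by positivity) (hbpos _ _ (by simp))
    (hbpos _ _ (by simp)) h

theorem ratio_anti_and_le_of_predecessors (hbpos : ∀ i j : ℕ, (i, j) ≠ (0, 0) → 0 < b i j)
    (ha : ∀ i j : ℕ, 1 ≤ i → 1 ≤ j →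
      a i j = ((j : ℝ) + q + 1) * a (i - 1) j + ((i : ℝ) + p + 1) * a i (j - 1))
    (hb : ∀ i j : ℕ, 1 ≤ i → 1 ≤ j →
      b i j = ((j : ℝ) + q) * b (i - 1) j + ((i : ℝ) + p + 1) * b i (j - 1))
    (hinit1 : ∀ j : ℕ, 1 ≤ j → a 0 (j + 1) / b 0 (j + 1) ≤ a 0 j / b 0 j)
    (hinit3 : ∀ i : ℕ, 1 ≤ i → a i 0 / b i 0 ≤ (q / (q + 1) : ℝ) * (a (i + 1) 0 / b (i + 1) 0))
    {i j : ℕ} (hij : (i, j) ≠ (0, 0))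
    (hleft : ∀ i', i = i' + 1 →
      a i' (j + 1) / b i' (j + 1) ≤
        ((q : ℝ) + (j + 1 : ℕ)) / ((q : ℝ) + 1 + (j + 1 : ℕ)) * (a (i' + 1) j / b (i' + 1) j))
    (hdown : ∀ j', j = j' + 1 →
      a i (j' + 1) / b i (j' + 1) ≤
        ((q : ℝ) + (j' + 1 : ℕ)) / ((q : ℝ) + 1 + (j' + 1 : ℕ)) * (a (i + 1) j' / b (i + 1) j')) :
    a i (j + 1) / b i (j + 1) ≤ a i j / b i j ∧
      a i j / b i j ≤ (((q : ℝ) + j) / ((q : ℝ) + 1 + j)) * (a (i + 1) j / b (i + 1) j) := by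
  have step := ratio_succ_bounds_of_le_coeff_mul hbpos ha hb
  rcases i with _ | i <;> rcases j with _ | j
  · exact absurd rfl hij
  · exact ⟨hinit1 (j + 1) (by omega), (step 0 j (hdown j rfl)).2⟩
  · exact ⟨(step i 0 (hleft i rfl)).1, by simpa using hinit3 (i + 1) (by omega)⟩
  · exact ⟨(step i (j + 1) (hleft i rfl)).1, (step (i + 1) j (hdown j rfl)).2⟩

theorem ratio_le_coeff_succ_mul_ratio (hapos : ∀ i j : ℕ, (i, j) ≠ (0, 0) → 0 < a i j)
    (hbpos : ∀ i j : ℕ, (i, j) ≠ (0, 0) → 0 < b i j)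
    (ha : ∀ i j : ℕ, 1 ≤ i → 1 ≤ j →
      a i j = ((j : ℝ) + q + 1) * a (i - 1) j + ((i : ℝ) + p + 1) * a i (j - 1))
    (hb : ∀ i j : ℕ, 1 ≤ i → 1 ≤ j →
      b i j = ((j : ℝ) + q) * b (i - 1) j + ((i : ℝ) + p + 1) * b i (j - 1))
    (hinit1 : ∀ j : ℕ, 1 ≤ j → a 0 (j + 1) / b 0 (j + 1) ≤ a 0 j / b 0 j)
    (hinit2 : a 0 1 / b 0 1 ≤ (q / (q + 1) : ℝ) * (a 1 0 / b 1 0))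
    (hinit3 : ∀ i : ℕ, 1 ≤ i → a i 0 / b i 0 ≤ (q / (q + 1) : ℝ) * (a (i + 1) 0 / b (i + 1) 0))
    (i j : ℕ) :
    a i (j + 1) / b i (j + 1) ≤
        ((q : ℝ) + (j + 1 : ℕ)) / ((q : ℝ) + 1 + (j + 1 : ℕ)) * (a (i + 1) j / b (i + 1) j) := by
  induction hn : i + j using Nat.strong_induction_on generalizing i j with
  | _ n ih =>
  have hnonneg : 0 ≤ a (i + 1) j / b (i + 1) j :=
    div_nonneg (hapos _ _ (by simp)).le (hbpos _ _ (by simp)).le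
  by_cases hij : (i, j) = (0, 0)
  · obtain ⟨rfl, rfl⟩ := Prod.mk.inj hij
    exact hinit2.trans (mul_le_mul_of_nonneg_right (by simpa using coeff_le_coeff_succ q 0) hnonneg)
  obtain ⟨hanti, hle⟩ := ratio_anti_and_le_of_predecessors hbpos ha hb hinit1 hinit3 hij
    (fun i' hi => ih (i' + j) (by omega) i' j rfl) (fun j' hj => ih (i + j') (by omega) i j' rfl)
  exact hanti.trans (hle.trans (mul_le_mul_of_nonneg_right (coeff_le_coeff_succ q j) hnonneg))

end Recurrence

theorem stmt5 (p q : ℕ) (a b : ℕ → ℕ → ℝ)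
    (hapos : ∀ i j : ℕ, (i, j) ≠ (0, 0) → 0 < a i j)
    (hbpos : ∀ i j : ℕ, (i, j) ≠ (0, 0) → 0 < b i j)
    (ha : ∀ i j : ℕ, 1 ≤ i → 1 ≤ j →
      a i j = ((j : ℝ) + q + 1) * a (i - 1) j + ((i : ℝ) + p + 1) * a i (j - 1))
    (hb : ∀ i j : ℕ, 1 ≤ i → 1 ≤ j →
      b i j = ((j : ℝ) + q) * b (i - 1) j + ((i : ℝ) + p + 1) * b i (j - 1))
    (hinit1 : ∀ j : ℕ, 1 ≤ j → a 0 (j + 1) / b 0 (j + 1) ≤ a 0 j / b 0 j)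
    (hinit2 : a 0 1 / b 0 1 ≤ (q / (q + 1) : ℝ) * (a 1 0 / b 1 0))
    (hinit3 : ∀ i : ℕ, 1 ≤ i → a i 0 / b i 0 ≤ (q / (q + 1) : ℝ) * (a (i + 1) 0 / b (i + 1) 0)) :
    ∀ i j : ℕ, (i, j) ≠ (0, 0) →
      a i (j + 1) / b i (j + 1) ≤ a i j / b i j ∧
        a i j / b i j ≤ (((q : ℝ) + j) / ((q : ℝ) + 1 + j)) * (a (i + 1) j / b (i + 1) j) := by
  intro i j hij
  have hC := ratio_le_coeff_succ_mul_ratio hapos hbpos ha hb hinit1 hinit2 hinit3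
  exact ratio_anti_and_le_of_predecessors hbpos ha hb hinit1 hinit3 hij (fun i' _ => hC i' j)
    (fun j' _ => hC i j')
end

section
/- For all nonnegative integers p, q, i, j with q ≥ 1, the generalized Eulerian numbers satisfy A_{p,q}(i,j+1)/A_{p,q-1}(i,j+1) ≤ A_{p,q}(i,j)/A_{p,q-1}(i,j) ≤ ((q+j)/(q+1+j))·A_{p,q}(i+1,j)/A_{p,q-1}(i+1,j), where the ratios are taken as real numbers. -/
namespace eulerA

lemma zero_right (p q i : ℕ) : eulerA p q i 0 = (q + 1) ^ i := by
  cases i <;> simp [eulerA]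

lemma zero_left (p q j : ℕ) : eulerA p q 0 j = (p + 1) ^ j := by
  cases j <;> simp [eulerA]

lemma succ_succ (p q i j : ℕ) :
    eulerA p q (i + 1) (j + 1) =
      (j + q + 2) * eulerA p q i (j + 1) + (i + p + 2) * eulerA p q (i + 1) j := by
  rw [eulerA]
  ring_nf

lemma pos (p q i j : ℕ) : 0 < eulerA p q i j := by
  induction i generalizing j with
  | zero => rw [zero_left]; positivity
  | succ i ih =>
    induction j with
    | zero => rw [zero_right]; positivity
    | succ j _ =>
      rw [succ_succ]
      have := ih (j + 1)
      positivity

section CrossInequalities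

variable (p q : ℕ)

lemma cross_right_succ_of_cross_diag (i j : ℕ)
    (h : (q + 3 + j) * (eulerA p (q + 1) i (j + 1) * eulerA p q (i + 1) j) ≤
      (q + 2 + j) * (eulerA p (q + 1) (i + 1) j * eulerA p q i (j + 1))) :
    eulerA p (q + 1) (i + 1) (j + 1) * eulerA p q (i + 1) j ≤
      eulerA p (q + 1) (i + 1) j * eulerA p q (i + 1) (j + 1) := by
  rw [succ_succ, succ_succ]
  linarith

lemma cross_left_succ_of_cross_diag (i j : ℕ)
    (h : (q + 3 + j) * (eulerA p (q + 1) i (j + 1) * eulerA p q (i + 1) j) ≤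
      (q + 2 + j) * (eulerA p (q + 1) (i + 1) j * eulerA p q i (j + 1))) :
    (q + 2 + (j + 1)) * (eulerA p (q + 1) i (j + 1) * eulerA p q (i + 1) (j + 1)) ≤
      (q + 1 + (j + 1)) * (eulerA p (q + 1) (i + 1) (j + 1) * eulerA p q i (j + 1)) := by
  rw [succ_succ, succ_succ]
  -- after cancelling the common term, the goal is `(i + p + 2)` times `h`
  nlinarith [Nat.mul_le_mul_left (i + p + 2) h]

lemma cross_diag_of_cross_right_of_cross_left (i j : ℕ)
    (hP : eulerA p (q + 1) i (j + 1) * eulerA p q i j ≤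
      eulerA p (q + 1) i j * eulerA p q i (j + 1))
    (hQ : (q + 2 + j) * (eulerA p (q + 1) i j * eulerA p q (i + 1) j) ≤
      (q + 1 + j) * (eulerA p (q + 1) (i + 1) j * eulerA p q i j)) :
    (q + 3 + j) * (eulerA p (q + 1) i (j + 1) * eulerA p q (i + 1) j) ≤
      (q + 2 + j) * (eulerA p (q + 1) (i + 1) j * eulerA p q i (j + 1)) := by
  set A₁ := eulerA p (q + 1) i (j + 1)
  set A₀ := eulerA p (q + 1) i j
  set A₀' := eulerA p (q + 1) (i + 1) j
  set B₁ := eulerA p q i (j + 1)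
  set B₀ := eulerA p q i j
  set B₀' := eulerA p q (i + 1) j
  have hsq : (q + 3 + j) * (q + 1 + j) ≤ (q + 2 + j) * (q + 2 + j) := by nlinarith
  have h : B₀ * ((q + 2 + j) * ((q + 3 + j) * (A₁ * B₀'))) ≤
      B₀ * ((q + 2 + j) * ((q + 2 + j) * (A₀' * B₁))) :=
    calc B₀ * ((q + 2 + j) * ((q + 3 + j) * (A₁ * B₀')))
        = (q + 3 + j) * (q + 2 + j) * B₀' * (A₁ * B₀) := by ring
      _ ≤ (q + 3 + j) * (q + 2 + j) * B₀' * (A₀ * B₁) := Nat.mul_le_mul_left _ hP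
      _ = (q + 3 + j) * B₁ * ((q + 2 + j) * (A₀ * B₀')) := by ring
      _ ≤ (q + 3 + j) * B₁ * ((q + 1 + j) * (A₀' * B₀)) := Nat.mul_le_mul_left _ hQ
      _ = (q + 3 + j) * (q + 1 + j) * (B₀ * (A₀' * B₁)) := by ring
      _ ≤ (q + 2 + j) * (q + 2 + j) * (B₀ * (A₀' * B₁)) := Nat.mul_le_mul_right _ hsq
      _ = B₀ * ((q + 2 + j) * ((q + 2 + j) * (A₀' * B₁))) := by ring
  exact Nat.le_of_mul_le_mul_left (Nat.le_of_mul_le_mul_left h (pos p q i j)) (by omega)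

lemma cross_left_of_cross_right (i : ℕ)
    (hP : ∀ j, eulerA p (q + 1) i (j + 1) * eulerA p q i j ≤
      eulerA p (q + 1) i j * eulerA p q i (j + 1)) (j : ℕ) :
    (q + 2 + j) * (eulerA p (q + 1) i j * eulerA p q (i + 1) j) ≤
      (q + 1 + j) * (eulerA p (q + 1) (i + 1) j * eulerA p q i j) := by
  induction j with
  | zero =>
    simp only [zero_right]
    exact le_of_eq (by ring)
  | succ j ih =>
    exact cross_left_succ_of_cross_diag p q i j
      (cross_diag_of_cross_right_of_cross_left p q i j (hP j) ih)

lemma cross_right_and_cross_left (i : ℕ) :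
    (∀ j, eulerA p (q + 1) i (j + 1) * eulerA p q i j ≤
      eulerA p (q + 1) i j * eulerA p q i (j + 1)) ∧
    ∀ j, (q + 2 + j) * (eulerA p (q + 1) i j * eulerA p q (i + 1) j) ≤
      (q + 1 + j) * (eulerA p (q + 1) (i + 1) j * eulerA p q i j) := by
  suffices hP : ∀ j, eulerA p (q + 1) i (j + 1) * eulerA p q i j ≤
      eulerA p (q + 1) i j * eulerA p q i (j + 1) from
    ⟨hP, cross_left_of_cross_right p q i hP⟩
  induction i with
  | zero =>
    intro j
    simp only [zero_left]
    exact le_of_eq (by ring)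
  | succ i ih =>
    intro j
    exact cross_right_succ_of_cross_diag p q i j
      (cross_diag_of_cross_right_of_cross_left p q i j (ih j)
        (cross_left_of_cross_right p q i ih j))

end CrossInequalities

end eulerA

theorem stmt6 (p q i j : ℕ) (hq : 1 ≤ q) :
    (eulerA p q i (j + 1) : ℝ) / (eulerA p (q - 1) i (j + 1)) ≤
        (eulerA p q i j : ℝ) / (eulerA p (q - 1) i j) ∧
      (eulerA p q i j : ℝ) / (eulerA p (q - 1) i j) ≤
        (((q : ℝ) + j) / ((q : ℝ) + 1 + j)) *
          ((eulerA p q (i + 1) j : ℝ) / (eulerA p (q - 1) (i + 1) j)) := by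
  obtain ⟨q, rfl⟩ : ∃ q', q = q' + 1 := ⟨q - 1, by omega⟩
  rw [Nat.add_sub_cancel]
  obtain ⟨hP, hQ⟩ := eulerA.cross_right_and_cross_left p q i
  have hpos : ∀ i j, (0 : ℝ) < eulerA p q i j := fun i j => mod_cast eulerA.pos p q i j
  constructor
  · rw [div_le_div_iff₀ (hpos i (j + 1)) (hpos i j)]
    exact_mod_cast hP j
  · rw [div_mul_div_comm, div_le_div_iff₀ (hpos i j) (by have := hpos (i + 1) j; positivity)]
    have hQ' : ((q + 2 + j : ℕ) : ℝ) * (eulerA p (q + 1) i j * eulerA p q (i + 1) j) ≤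
        ((q + 1 + j : ℕ) : ℝ) * (eulerA p (q + 1) (i + 1) j * eulerA p q i j) :=
      mod_cast hQ j
    push_cast at hQ' ⊢
    linarith
end

section
/- Let p, q be nonnegative integers with q ≥ 1 and fix a nonnegative integer i. Then the sequence j ↦ A_{p,q}(i,j)/A_{p,q-1}(i,j) (a sequence of real numbers) is nonincreasing in j and converges to (p+q+i+1)/(p+q+1) as j → ∞. -/
open Filter Finset Topology

@[simp]
lemma eulerA_zero_right (p q i : ℕ) : eulerA p q i 0 = (q + 1) ^ i := by
  cases i <;> simp [eulerA]

@[simp]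
lemma eulerA_zero_left (p q j : ℕ) : eulerA p q 0 j = (p + 1) ^ j := by
  cases j <;> simp [eulerA]

lemma eulerA_succ_succ (p q i j : ℕ) :
    eulerA p q (i + 1) (j + 1) =
      (j + q + 2) * eulerA p q i (j + 1) + (i + p + 2) * eulerA p q (i + 1) j := by
  rw [eulerA]; ring_nf

lemma eulerA_pos (p q i j : ℕ) : 0 < eulerA p q i j := by
  induction i generalizing j with
  | zero => simp only [eulerA_zero_left]; positivity
  | succ i ih =>
    induction j with
    | zero => simp only [eulerA_zero_right]; positivity
    | succ j ihj => rw [eulerA_succ_succ]; have := ih (j + 1); positivity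

lemma mul_eulerA_le_eulerA_succ_right (p q i j : ℕ) :
    (p + i + 1) * eulerA p q i j ≤ eulerA p q i (j + 1) := by
  cases i with
  | zero => simp [pow_succ, mul_comm]
  | succ i => rw [eulerA_succ_succ]; nlinarith

lemma add_div_add_mem_Icc {a b c d : ℝ} (hb : 0 < b) (hd : 0 < d) (h : a / b ≤ c / d) :
    (a + c) / (b + d) ∈ Set.Icc (a / b) (c / d) := by
  rw [div_le_div_iff₀ hb hd] at h
  constructor <;> rw [div_le_div_iff₀ (by positivity) (by positivity)] <;> nlinarith

noncomputable def eulerRatio (p q i j : ℕ) : ℝ := eulerA p (q + 1) i j / eulerA p q i j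

lemma eulerRatio_zero_left (p q j : ℕ) : eulerRatio p q 0 j = 1 := by
  simp only [eulerRatio, eulerA_zero_left]
  exact div_self (by positivity)

lemma eulerRatio_succ_zero (p q i : ℕ) :
    eulerRatio p q (i + 1) 0 = (q + 2) / (q + 1) * eulerRatio p q i 0 := by
  simp only [eulerRatio, eulerA_zero_right]
  push_cast
  rw [pow_succ, pow_succ, mul_div_mul_comm, mul_comm]
  ring_nf

/-- The recurrence exhibits `eulerRatio p q (i + 1) (j + 1)` as a mediant. -/
lemma eulerRatio_succ_succ_mem_Icc (p q i j : ℕ)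
    (h : (j + q + 3) / (j + q + 2) * eulerRatio p q i (j + 1) ≤ eulerRatio p q (i + 1) j) :
    eulerRatio p q (i + 1) (j + 1) ∈
      Set.Icc ((j + q + 3) / (j + q + 2) * eulerRatio p q i (j + 1)) (eulerRatio p q (i + 1) j) := by
  have hA := fun i j => (Nat.cast_pos (α := ℝ)).2 (eulerA_pos p q i j)
  have hx : ((j + q + 3) * eulerA p (q + 1) i (j + 1) : ℝ) / ((j + q + 2) * eulerA p q i (j + 1))
      = (j + q + 3) / (j + q + 2) * eulerRatio p q i (j + 1) := mul_div_mul_comm _ _ _ _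
  have hu : ((i + p + 2) * eulerA p (q + 1) (i + 1) j : ℝ) / ((i + p + 2) * eulerA p q (i + 1) j)
      = eulerRatio p q (i + 1) j := mul_div_mul_left _ _ (by positivity)
  have hsplit : eulerRatio p q (i + 1) (j + 1) =
      ((j + q + 3) * eulerA p (q + 1) i (j + 1) + (i + p + 2) * eulerA p (q + 1) (i + 1) j) /
        ((j + q + 2) * eulerA p q i (j + 1) + (i + p + 2) * eulerA p q (i + 1) j : ℝ) := by
    simp only [eulerRatio, eulerA_succ_succ]; push_cast; ring_nf
  rw [hsplit, ← hx, ← hu]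
  rw [← hx, ← hu] at h
  exact add_div_add_mem_Icc (by have := hA i (j + 1); positivity)
    (by have := hA (i + 1) j; positivity) h

lemma antitone_eulerRatio (p q i : ℕ) : Antitone (eulerRatio p q i) := by
  induction i with
  | zero => intro a b _; simp only [eulerRatio_zero_left, le_refl]
  | succ i ih =>
    have hweight : ∀ j : ℕ, (j + q + 3) / (j + q + 2) * eulerRatio p q i (j + 1) ≤
        (j + q + 2) / (j + q + 1) * eulerRatio p q i j := by
      intro j
      refine mul_le_mul ?_ (ih j.le_succ) (div_nonneg (by positivity) (by positivity))
        (by positivity)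
      rw [div_le_div_iff₀ (by positivity) (by positivity)]
      nlinarith
    have hcross : ∀ j : ℕ, (j + q + 3) / (j + q + 2) * eulerRatio p q i (j + 1) ≤
        eulerRatio p q (i + 1) j := by
      intro j
      induction j with
      | zero => simpa [eulerRatio_succ_zero, add_comm, add_left_comm] using hweight 0
      | succ j ihj =>
        calc _ ≤ (j + q + 3) / (j + q + 2) * eulerRatio p q i (j + 1) := by
              convert hweight (j + 1) using 3 <;> push_cast <;> ring
          _ ≤ eulerRatio p q (i + 1) (j + 1) := (eulerRatio_succ_succ_mem_Icc p q i j ihj).1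
    exact antitone_nat_of_succ_le fun j => (eulerRatio_succ_succ_mem_Icc p q i j (hcross j)).2

/-- Split a path according to the height `q + m` of its first horizontal step. -/
lemma eulerA_succ_left (p q i j : ℕ) :
    eulerA p q (i + 1) j = ∑ x ∈ antidiagonal j,
      (p + 1) ^ x.1 * (q + x.1 + 1) * eulerA (p + 1) (q + x.1) i x.2 := by
  induction i generalizing j with
  | zero =>
    induction j with
    | zero => simp
    | succ j ihj =>
      rw [eulerA_succ_succ, ihj, Nat.sum_antidiagonal_succ', mul_sum]
      simp only [eulerA_zero_left, eulerA_zero_right, pow_succ]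
      congr 1
      · ring
      · exact sum_congr rfl fun x _ => by ring
  | succ i ih =>
    induction j with
    | zero =>
      simp only [eulerA_zero_right, HasAntidiagonal.antidiagonal_zero, sum_singleton, pow_zero, add_zero, one_mul]
      ring
    | succ j ihj =>
      have hterm : ∀ x ∈ antidiagonal j,
          (p + 1) ^ x.1 * (q + x.1 + 1) * eulerA (p + 1) (q + x.1) (i + 1) (x.2 + 1) =
            (j + q + 2) * ((p + 1) ^ x.1 * (q + x.1 + 1) * eulerA (p + 1) (q + x.1) i (x.2 + 1))
            + (i + 1 + p + 2) *
              ((p + 1) ^ x.1 * (q + x.1 + 1) * eulerA (p + 1) (q + x.1) (i + 1) x.2) := by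
        intro x hx
        rw [eulerA_succ_succ, ← mem_antidiagonal.mp hx]
        ring
      rw [eulerA_succ_succ, ihj, ih, Nat.sum_antidiagonal_succ', Nat.sum_antidiagonal_succ',
        sum_congr rfl hterm, sum_add_distrib, ← mul_sum, ← mul_sum]
      simp only [eulerA_zero_right]
      ring

lemma tendsto_sum_antidiagonal_of_dominated {b : ℕ → ℕ → ℝ} {l bound : ℕ → ℝ}
    (h_sum : Summable bound) (hb : ∀ m, Tendsto (b m) atTop (𝓝 (l m)))
    (h_bound : ∀ m n, ‖b m n‖ ≤ bound m) :
    Tendsto (fun j => ∑ x ∈ antidiagonal j, b x.1 x.2) atTop (𝓝 (∑' m, l m)) := by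
  set f : ℕ → ℕ → ℝ := fun j m => if m ≤ j then b m (j - m) else 0
  have hsum : ∀ j, ∑ x ∈ antidiagonal j, b x.1 x.2 = ∑' m, f j m := by
    intro j
    rw [Nat.sum_antidiagonal_eq_sum_range_succ (fun m n => b m n),
      tsum_eq_sum (s := range (j + 1))]
    · exact sum_congr rfl fun m hm => (if_pos (Nat.lt_succ_iff.mp (mem_range.mp hm))).symm
    · intro m hm
      exact if_neg fun h => hm (mem_range.mpr (Nat.lt_succ_of_le h))
  simp_rw [hsum]
  refine tendsto_tsum_of_dominated_convergence h_sum (fun m => ?_) ?_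
  · refine ((hb m).comp (tendsto_sub_atTop_nat m)).congr' ?_
    filter_upwards [eventually_ge_atTop m] with j hj
    simp [f, hj]
  · refine Eventually.of_forall fun j m => ?_
    by_cases h : m ≤ j
    · simpa [f, h] using h_bound m (j - m)
    · simpa [f, h] using (norm_nonneg _).trans (h_bound m 0)

lemma Nat.mul_choose_add_mul_succ_choose_succ (a b i : ℕ) :
    b * (a + b + i).choose i + a * (a + b + i + 1).choose (i + 1) =
      (a + i + 1) * (a + b + i).choose (i + 1) := by
  have h := Nat.choose_succ_right_eq (a + b + i) i
  rw [Nat.add_sub_cancel] at h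
  rw [Nat.choose_succ_succ']
  nlinarith

lemma tendsto_pow_mul_choose_add {t : ℝ} (ht0 : 0 < t) (ht1 : t < 1) (K k : ℕ) :
    Tendsto (fun m => t ^ m * ((m + K).choose k : ℝ)) atTop (𝓝 0) := by
  have hpoly : Tendsto (fun m => ((m + K : ℕ) : ℝ) ^ k * t ^ (m + K)) atTop (𝓝 0) :=
    (tendsto_pow_const_mul_const_pow_of_abs_lt_one k (abs_lt.2 ⟨by linarith, ht1⟩)).comp
      (tendsto_add_atTop_nat K)
  have hscaled := hpoly.const_mul (t ^ K)⁻¹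
  rw [mul_zero] at hscaled
  refine squeeze_zero (fun m => by positivity) (fun m => ?_) hscaled
  calc t ^ m * ((m + K).choose k : ℝ) ≤ t ^ m * ((m + K : ℕ) : ℝ) ^ k := by
        gcongr; exact_mod_cast Nat.choose_le_pow _ _
    _ = (t ^ K)⁻¹ * (((m + K : ℕ) : ℝ) ^ k * t ^ (m + K)) := by
        rw [pow_add]; field_simp

lemma monotone_eulerA_div_pow (p q i : ℕ) :
    Monotone fun j => (eulerA p q i j : ℝ) / (p + i + 1) ^ j := by
  refine monotone_nat_of_le_succ fun j => ?_
  have h : ((p + i + 1) * eulerA p q i j : ℝ) ≤ eulerA p q i (j + 1) := by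
    exact_mod_cast mul_eulerA_le_eulerA_succ_right p q i j
  rw [pow_succ, div_le_div_iff₀ (by positivity) (by positivity)]
  nlinarith [pow_pos (show (0 : ℝ) < p + i + 1 by positivity) j]

def eulerLimit (p q i : ℕ) : ℕ := (p + i + 1) ^ i * (p + q + i + 1).choose i

lemma eulerLimit_pos (p q i : ℕ) : 0 < eulerLimit p q i :=
  Nat.mul_pos (by positivity) (Nat.choose_pos (by omega))

lemma hasSum_eulerLimit (p q i : ℕ) :
    HasSum (fun m => ((p + 1) / (p + i + 2) : ℝ) ^ m * (q + m + 1) * eulerLimit (p + 1) (q + m) i)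
      (eulerLimit p q (i + 1)) := by
  set t : ℝ := (p + 1) / (p + i + 2)
  have ht : t * (p + i + 2) = p + 1 := div_mul_cancel₀ _ (by positivity)
  set K := p + q + i + 2
  set G : ℕ → ℝ := fun m => (p + i + 2) ^ (i + 1) * (t ^ m * ((m + K).choose (i + 1) : ℝ))
  have hterm : ∀ m, t ^ m * (q + m + 1) * eulerLimit (p + 1) (q + m) i = G m - G (m + 1) := by
    intro m
    have key : ((q + m + 1) * (m + K).choose i + (p + 1) * (m + 1 + K).choose (i + 1) : ℝ) =
        (p + i + 2) * (m + K).choose (i + 1) := by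
      have h := Nat.mul_choose_add_mul_succ_choose_succ (p + 1) (q + m + 1) i
      rw [show p + 1 + (q + m + 1) + i = m + K by ring,
        show m + K + 1 = m + 1 + K by ring, show p + 1 + i + 1 = p + i + 2 by ring] at h
      exact_mod_cast h
    simp only [G, eulerLimit]
    rw [show p + 1 + (q + m) + i + 1 = m + K by ring]
    push_cast
    linear_combination (t ^ m * (p + i + 2) ^ i) * key +
      (t ^ m * (p + i + 2) ^ i * ((m + 1 + K).choose (i + 1) : ℝ)) * ht
  have hG : Tendsto G atTop (𝓝 0) := by
    simpa using (tendsto_pow_mul_choose_add (div_pos (by positivity) (by positivity))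
      ((div_lt_one (by positivity)).2 (by linarith)) K (i + 1)).const_mul
      ((p + i + 2 : ℝ) ^ (i + 1))
  have hG0 : G 0 = eulerLimit p q (i + 1) := by
    simp only [G, eulerLimit, K]; push_cast; ring_nf
  rw [hasSum_iff_tendsto_nat_of_nonneg (fun m => by positivity)]
  simp_rw [hterm, sum_range_sub']
  simpa [hG0] using tendsto_const_nhds.sub hG

theorem tendsto_eulerA_div_pow (p q i : ℕ) :
    Tendsto (fun j => (eulerA p q i j : ℝ) / (p + i + 1) ^ j) atTop (𝓝 (eulerLimit p q i)) := by
  induction i generalizing p q with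
  | zero =>
    refine tendsto_const_nhds.congr fun j => ?_
    simp only [eulerLimit, eulerA_zero_left]
    push_cast
    rw [pow_zero, one_mul, Nat.choose_zero_right, Nat.cast_one, add_zero]
    exact (div_self (by positivity)).symm
  | succ i ih =>
    set t : ℝ := (p + 1) / (p + i + 2)
    have hr : ((p + 1 : ℕ) : ℝ) + i + 1 = p + i + 2 := by push_cast; ring
    have hr' : (p : ℝ) + ↑(i + 1) + 1 = p + i + 2 := by push_cast; ring
    simp only [hr']
    set b : ℕ → ℕ → ℝ := fun m n =>
      t ^ m * (q + m + 1) * ((eulerA (p + 1) (q + m) i n : ℝ) / (p + i + 2) ^ n)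
    have hsplit : ∀ j, (eulerA p q (i + 1) j : ℝ) / (p + i + 2) ^ j =
        ∑ x ∈ antidiagonal j, b x.1 x.2 := by
      intro j
      rw [eulerA_succ_left, Nat.cast_sum, sum_div]
      refine sum_congr rfl fun x hx => ?_
      rw [← mem_antidiagonal.mp hx]
      simp only [b, t, div_pow, pow_add]
      push_cast
      field_simp
    have hb : ∀ m, Tendsto (b m) atTop
        (𝓝 (t ^ m * (q + m + 1) * eulerLimit (p + 1) (q + m) i)) := by
      intro m
      have := ih (p + 1) (q + m)
      rw [hr] at this
      exact this.const_mul _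
    have hbound : ∀ m n, ‖b m n‖ ≤ t ^ m * (q + m + 1) * eulerLimit (p + 1) (q + m) i := by
      intro m n
      have hmono := monotone_eulerA_div_pow (p + 1) (q + m) i
      have hlim := ih (p + 1) (q + m)
      rw [hr] at hmono hlim
      rw [Real.norm_of_nonneg (by positivity)]
      exact mul_le_mul_of_nonneg_left (hmono.ge_of_tendsto hlim n) (by positivity)
    have hsum := hasSum_eulerLimit p q i
    simp_rw [hsplit, ← hsum.tsum_eq]
    exact tendsto_sum_antidiagonal_of_dominated hsum.summable hb hbound

lemma eulerLimit_succ_div (p q i : ℕ) :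
    (eulerLimit p (q + 1) i : ℝ) / eulerLimit p q i = (p + q + i + 2) / (p + q + 2) := by
  have h := Nat.choose_mul_succ_eq (p + q + i + 1) i
  rw [show p + q + i + 1 + 1 - i = p + q + 2 by omega] at h
  have hN : eulerLimit p (q + 1) i * (p + q + 2) = (p + q + i + 2) * eulerLimit p q i := by
    simp only [eulerLimit, show p + (q + 1) + i + 1 = p + q + i + 1 + 1 by ring, mul_assoc, ← h]
    ring
  rw [div_eq_div_iff (by exact_mod_cast (eulerLimit_pos p q i).ne') (by positivity)]
  exact_mod_cast hN

lemma tendsto_eulerRatio (p q i : ℕ) :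
    Tendsto (eulerRatio p q i) atTop (𝓝 ((p + q + i + 2) / (p + q + 2))) := by
  rw [← eulerLimit_succ_div]
  refine ((tendsto_eulerA_div_pow p (q + 1) i).div (tendsto_eulerA_div_pow p q i)
    (by exact_mod_cast (eulerLimit_pos p q i).ne')).congr fun j => ?_
  exact div_div_div_cancel_right₀ (by positivity) _ _

theorem stmt7 (p q i : ℕ) (hq : 1 ≤ q) :
    Antitone (fun j : ℕ => (eulerA p q i j : ℝ) / (eulerA p (q - 1) i j)) ∧
      Filter.Tendsto (fun j : ℕ => (eulerA p q i j : ℝ) / (eulerA p (q - 1) i j))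
        Filter.atTop (nhds (((p : ℝ) + q + i + 1) / ((p : ℝ) + q + 1))) := by
  obtain ⟨Q, rfl⟩ : ∃ Q, q = Q + 1 := ⟨q - 1, by omega⟩
  have hvalue : ((p : ℝ) + ↑(Q + 1) + i + 1) / ((p : ℝ) + ↑(Q + 1) + 1) =
      (p + Q + i + 2) / (p + Q + 2) := by
    push_cast; ring
  rw [hvalue]
  exact ⟨antitone_eulerRatio p Q i, tendsto_eulerRatio p Q i⟩
end
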